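/- Let π be either player, let Δ be a π-delay of a run Γ, and let ⟨Ψ, πα⟩ be a finite initial segment of Δ. Let ⟨Φ, πα⟩ be the shortest initial segment of Γ containing all π-labeled moves of ⟨Ψ, πα⟩ (such an initial segment exists and ends with the labmove πα, since Γ and Δ have identical subsequences of π-labeled moves). Then the subsequence of ¬π-labeled moves of Φ is an initial segment of the subsequence of ¬π-labeled moves of Ψ, and, letting Θ be the sequence of ¬π-labeled moves of Ψ that do not occur in Φ (i.e., the remainder of Ψ's ¬π-subsequence after Φ's ¬π-subsequence), the run ⟨Ψ, πα⟩ is a π-delay of the run ⟨Φ, πα, Θ⟩. -/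

import Mathlib

/- ============================================================
   Computability Logic: runs, constant games, delays, static
   games, and the tight/loose toggling-branching recurrences.
   ============================================================ -/

/-- The two players: `top` (⊤, the machine) and `bot` (⊥, the environment). -/
inductive Player : Type
  | top : Player
  | bot : Player
deriving DecidableEq

/-- The adversary (opposite) of a player. -/
def Player.opp : Player → Player
  | .top => .bot
  | .bot => .top

/-- Symbols of the fixed move alphabet: the bits `0` and `1`, the period `.`,
the colon `:`, and (countably many) other characters. -/
inductive CSym : Type
  | b0 : CSym
  | b1 : CSym
  | dot : CSym
  | colon : CSym
  | ch : ℕ → CSym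
deriving DecidableEq

/-- A move is a finite string over the fixed alphabet. -/
abbrev Move := List CSym

/-- A labmove is a move together with the label of the player who made it. -/
abbrev Labmove := Player × Move

/-- A run is a finite or infinite sequence of labmoves. -/
abbrev Run := Stream'.Seq Labmove

/-- A position is a finite run. -/
abbrev Position := List Labmove

/-- The symbol encoding a bit. -/
def bitSym (b : Bool) : CSym := if b then .b1 else .b0

/-- The move that is the bare bitstring `w`. -/
def bitsMove (w : List Bool) : Move := w.map bitSym

/-- The (replicative-style) move `w:`. -/
def repMove (w : List Bool) : Move := bitsMove w ++ [.colon]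

/-- The (non-replicative-style) move `w.α`. -/
def dotMove (w : List Bool) (α : Move) : Move := bitsMove w ++ (.dot :: α)

/-- Decode a move that is a bare bitstring. -/
def asBits : Move → Option (List Bool)
  | [] => some []
  | .b0 :: r => (asBits r).map (false :: ·)
  | .b1 :: r => (asBits r).map (true :: ·)
  | _ => none

/-- Decode a move of the form `w:` (`w` a bitstring). -/
def asRep : Move → Option (List Bool)
  | [.colon] => some []
  | .b0 :: r => (asRep r).map (false :: ·)
  | .b1 :: r => (asRep r).map (true :: ·)
  | _ => none

/-- Decode a move of the form `w.α` (`w` a bitstring, `α` a move), splitting at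
the (unique such) period. -/
def splitDot : Move → Option (List Bool × Move)
  | .dot :: r => some ([], r)
  | .b0 :: r => (splitDot r).map (fun p => (false :: p.1, p.2))
  | .b1 :: r => (splitDot r).map (fun p => (true :: p.1, p.2))
  | _ => none

/-- Infinite bitstrings. -/
abbrev IStr := ℕ → Bool

/-- The length-`n` initial segment of an infinite bitstring. -/
def prefOf (n : ℕ) (v : IStr) : List Bool := (List.range n).map v

/-- `u` is a finite initial segment of the infinite bitstring `v`. -/
def IsPref (u : List Bool) (v : IStr) : Prop := u = prefOf u.length v

instance (u : List Bool) (v : IStr) : Decidable (IsPref u v) := by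
  unfold IsPref; infer_instance

/-- The finite bitstring `w` with infinitely many `0`s appended. -/
def ezero (w : List Bool) : IStr := fun i => w.getD i false

/-- The finite bitstring `w` followed by the infinite bitstring `v`. -/
def capp (w : List Bool) (v : IStr) : IStr :=
  fun i => if i < w.length then w.getD i false else v (i - w.length)

/-- The indices of `s` whose entry is kept by the filtering function `p`. -/
def fmPred {α β : Type*} (p : α → Option β) (s : Stream'.Seq α) (i : ℕ) : Prop :=
  ∃ a, s.get? i = some a ∧ (p a).isSome

/-- `p` has at least `n+1` witnesses. -/
def HasNth (p : ℕ → Prop) (n : ℕ) : Prop :=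
  ∀ hf : (setOf p).Finite, n < hf.toFinset.card

open Classical in
/-- The subsequence of a (finite or infinite) sequence obtained by
filtering/translating its entries through `p`. -/
noncomputable def seqFilterMap {α β : Type*} (p : α → Option β) (s : Stream'.Seq α) :
    Stream'.Seq β := by
  refine ⟨fun k => if HasNth (fmPred p s) k
    then ((s.get? (Nat.nth (fmPred p s) k)).bind p) else none, ?_⟩
  intro n hn
  have hval : ∀ k, HasNth (fmPred p s) k →
      (if HasNth (fmPred p s) k then ((s.get? (Nat.nth (fmPred p s) k)).bind p) else none)
        ≠ none := by
    intro k hk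
    obtain ⟨a, ha, hpa⟩ := Nat.nth_mem (p := fmPred p s) k hk
    rw [if_pos hk, ha]
    simpa [Option.isSome_iff_ne_none] using hpa
  by_cases h : HasNth (fmPred p s) (n + 1)
  · exact absurd hn (hval n (fun hf => lt_of_le_of_lt (Nat.le_succ n) (h hf)))
  · exact if_neg h

/-- The filtered subsequence of a position (finite-run analogue of `seqFilterMap`). -/
def listFilterMap {β : Type*} (p : Labmove → Option β) (Φ : Position) : List β :=
  Φ.filterMap p

/-- The filtering function for `Ω^{≼v}`: keep labmoves `π u.α` with `u` an initial
segment of `v`, turning them into `π α`. -/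
def subFn (v : IStr) (lm : Labmove) : Option Labmove :=
  match splitDot lm.2 with
  | some (u, α) => if IsPref u v then some (lm.1, α) else none
  | none => none

/-- `Ω^{≼v}` for a run `Ω`. -/
noncomputable def subAt (v : IStr) (Γ : Run) : Run := seqFilterMap (subFn v) Γ

/-- `Φ^{≼v}` for a position `Φ`. -/
def subAtL (v : IStr) (Φ : Position) : Position := Φ.filterMap (subFn v)

/-- The result of changing every label in a run to its opposite. -/
def negRun (Γ : Run) : Run := Γ.map (fun lm => (lm.1.opp, lm.2))

/-- The subsequence of `π`-labeled moves of a run. -/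
noncomputable def subseqOf (π : Player) (Γ : Run) : Run :=
  seqFilterMap (fun lm => if lm.1 = π then some lm else none) Γ

/-- The subsequence of `π`-labeled moves of a position. -/
def subL (π : Player) (Φ : Position) : Position :=
  Φ.filter (fun lm => decide (lm.1 = π))

/-- The indices of the `π`-labeled moves of a run. -/
def labPred (π : Player) (Γ : Run) (i : ℕ) : Prop := ∃ m, Γ.get? i = some (π, m)

/-- `Δ` is a `π`-delay of `Γ`: (1) for both players `π'`, the subsequence of
`π'`-labeled moves of `Δ` is identical to that of `Γ`; (2) whenever the `n`-th
`π`-labeled move is made later than the `k`-th `¬π`-labeled move in `Γ`, so is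
it in `Δ`. -/
def Delay (π : Player) (Δ Γ : Run) : Prop :=
  (∀ π' : Player, subseqOf π' Δ = subseqOf π' Γ) ∧
  (∀ n k : ℕ, HasNth (labPred π Γ) n → HasNth (labPred π.opp Γ) k →
    Nat.nth (labPred π Γ) n > Nat.nth (labPred π.opp Γ) k →
    Nat.nth (labPred π Δ) n > Nat.nth (labPred π.opp Δ) k)

/-- A constant game: a set of legal runs and an assignment of winners. -/
structure Game where
  legal : Run → Prop
  wins : Run → Player

/-- Well-formedness of a constant game: the empty position is legal, and a run
is legal iff all of its finite initial segments are. -/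
def Game.IsGame (A : Game) : Prop :=
  A.legal (Stream'.Seq.ofList []) ∧
  ∀ Γ : Run, A.legal Γ ↔ ∀ n : ℕ, A.legal (Stream'.Seq.ofList (Stream'.Seq.take n Γ))

/-- The run `Γ` is `π`-illegal in `A`: its shortest illegal initial segment has
the form `⟨Φ, πα⟩`. -/
def Game.IllegalBy (A : Game) (π : Player) (Γ : Run) : Prop :=
  ∃ n : ℕ,
    (∀ m ≤ n, A.legal (Stream'.Seq.ofList (Stream'.Seq.take m Γ))) ∧
    ¬ A.legal (Stream'.Seq.ofList (Stream'.Seq.take (n + 1) Γ)) ∧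
    ∃ m : Move, Γ.get? n = some (π, m)

/-- `Γ` is a `π`-won run of `A`: either `Γ` is legal and `Wn` names `π`, or `Γ`
is `¬π`-illegal (an illegal run is won by the adversary of the first offender). -/
def Game.won (A : Game) (π : Player) (Γ : Run) : Prop :=
  (A.legal Γ ∧ A.wins Γ = π) ∨ A.IllegalBy π.opp Γ

/-- A constant game is static iff `π`-won runs are preserved by `π`-delays. -/
def Game.Static (A : Game) : Prop :=
  ∀ (π : Player) (Γ Δ : Run), Delay π Δ Γ → A.won π Γ → A.won π Δ

/-- The negation `¬A` of a constant game: the roles of the players are interchanged. -/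
def Game.neg (A : Game) : Game where
  legal Γ := A.legal (negRun Γ)
  wins Γ := (A.wins (negRun Γ)).opp

/-- `w` is an actual node of the position `Φ`: `w` is empty, or `w = u0` or
`w = u1` for some bitstring `u` such that `Φ` contains the move `u:`. -/
def ActualNode (Φ : Position) (w : List Bool) : Prop :=
  w = [] ∨ ∃ (u : List Bool) (b : Bool), w = u ++ [b] ∧ ∃ π : Player, (π, repMove u) ∈ Φ

/-- `w` is an outer actual node of `Φ`: an actual node that is not a proper
prefix of any other actual node of `Φ`. -/
def OuterNode (Φ : Position) (w : List Bool) : Prop :=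
  ActualNode Φ w ∧ ∀ w' : List Bool, ActualNode Φ w' → w <+: w' → w = w'

/-- `m` is a legal move by `π` in the legal position `Φ` of `⫰ᵀA`: a switch
move, a replicative move, or a non-replicative move. -/
def TightMove (A : Game) (Φ : Position) (π : Player) (m : Move) : Prop :=
  (π = .bot ∧ ∃ w : List Bool, asBits m = some w ∧ ActualNode Φ w) ∨
  (π = .bot ∧ ∃ w : List Bool, asRep m = some w ∧ OuterNode Φ w) ∨
  (∃ (w : List Bool) (α : Move), splitDot m = some (w, α) ∧ ActualNode Φ w ∧
    ∀ v : IStr, A.legal (Stream'.Seq.ofList (subAtL (capp w v) Φ ++ [(π, α)])))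

/-- The legal positions of `⫰ᵀA`. -/
inductive TightLegalPos (A : Game) : Position → Prop
  | nil : TightLegalPos A []
  | snoc {Φ : Position} {π : Player} {m : Move} :
      TightLegalPos A Φ → TightMove A Φ π m → TightLegalPos A (Φ ++ [(π, m)])

/-- The indices of the switch moves (by player `π`) of a run: `π`-labeled moves
whose move part is a bare bitstring. -/
def SwSetP (π : Player) (Γ : Run) : Set ℕ :=
  {i | ∃ (m : Move) (w : List Bool), Γ.get? i = some (π, m) ∧ asBits m = some w}

open Classical in
/-- The index of the last switch move (by `π`) of a run, when there are finitely
many and at least one (junk value `0` otherwise). -/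
noncomputable def lastSwitchIdxP (π : Player) (Γ : Run) : ℕ :=
  if h : (SwSetP π Γ).Finite ∧ (SwSetP π Γ).Nonempty then
    h.1.toFinset.max' (h.1.toFinset_nonempty.mpr h.2)
  else 0

open Classical in
/-- The bitstring of the last switch move (by `π`) of a run; the empty bitstring
if there are no switch moves (or infinitely many). -/
noncomputable def lastSwitchBitsP (π : Player) (Γ : Run) : List Bool :=
  if (SwSetP π Γ).Finite ∧ (SwSetP π Γ).Nonempty then
    ((Γ.get? (lastSwitchIdxP π Γ)).bind (fun lm => asBits lm.2)).getD []
  else []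

/-- The infinite bitstring `t`: the last (`⊥`-made) switch move of `Γ` with
infinitely many `0`s appended, or the infinite string of `0`s if there are no
switch moves. -/
noncomputable def tStream (Γ : Run) : IStr := ezero (lastSwitchBitsP .bot Γ)

open Classical in
/-- The tight toggling-branching recurrence `⫰ᵀA`. -/
noncomputable def tight (A : Game) : Game where
  legal Γ := ∀ n : ℕ, TightLegalPos A (Stream'.Seq.take n Γ)
  wins Γ :=
    if (SwSetP .bot Γ).Finite ∧ A.won .bot (subAt (tStream Γ) Γ) then .bot else .top

/-- The tight toggling-branching corecurrence `⫯ᵀA = ¬⫰ᵀ¬A`. -/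
noncomputable def cotight (A : Game) : Game := Game.neg (tight (Game.neg A))

/-- The shape of legal labmoves of `⫰ᴸA`: `⊥w` (a switch move) for a bitstring
`w`, or `πw.α`. -/
def LooseShape (lm : Labmove) : Prop :=
  (lm.1 = .bot ∧ ∃ w : List Bool, asBits lm.2 = some w) ∨
  (∃ (w : List Bool) (α : Move), splitDot lm.2 = some (w, α))

open Classical in
/-- The loose toggling-branching recurrence `⫰ᴸA`. -/
noncomputable def loose (A : Game) : Game where
  legal Γ := (∀ (i : ℕ) (lm : Labmove), Γ.get? i = some lm → LooseShape lm) ∧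
    ∀ v : IStr, A.legal (subAt v Γ)
  wins Γ :=
    if (SwSetP .bot Γ).Finite ∧ A.won .bot (subAt (tStream Γ) Γ) then .bot else .top

/-- The loose toggling-branching corecurrence `⫯ᴸA = ¬⫰ᴸ¬A`. -/
noncomputable def coloose (A : Game) : Game := Game.neg (loose (Game.neg A))

/-- The sequence of (bitstrings of) switch moves made by `π` in a run, in order. -/
noncomputable def swSeq (π : Player) (Γ : Run) : Stream'.Seq (List Bool) :=
  seqFilterMap (fun lm => if lm.1 = π then asBits lm.2 else none) Γ

/-- The move `i.α` (component prefix for parallel combinations). -/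
def compMove (i : ℕ) (α : Move) : Move := .ch i :: .dot :: α

/-- `Δ^{i.}`: the labmoves of the form `π i.α` of `Δ`, with the prefix `i.` removed. -/
noncomputable def proj (i : ℕ) (Δ : Run) : Run :=
  seqFilterMap (fun lm =>
    match lm.2 with
    | .ch j :: .dot :: α => if j = i then some (lm.1, α) else none
    | _ => none) Δ

open Classical in
/-- The parallel disjunction `A ∨ B`. -/
noncomputable def Game.por (A B : Game) : Game where
  legal Δ :=
    (∀ (k : ℕ) (lm : Labmove), Δ.get? k = some lm →
      ∃ (i : ℕ) (α : Move), (i = 1 ∨ i = 2) ∧ lm.2 = compMove i α) ∧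
    A.legal (proj 1 Δ) ∧ B.legal (proj 2 Δ)
  wins Δ :=
    if A.won .top (proj 1 Δ) ∨ B.won .top (proj 2 Δ) then .top else .bot

/-! If the `k`-th `¬π`-move of `Φ` precedes the last move `πα` of `⟨Φ, πα⟩` in `Γ`, the delay
property places the `k`-th `¬π`-move of `Δ` before `πα` in `Δ`, that is, inside `Ψ`; as `Γ` and
`Δ` have the same `¬π`-subsequence, that of `Φ` is an initial segment of that of `Ψ`. All
`π`-moves of `⟨Φ, πα, Θ⟩` lie in `⟨Φ, πα⟩`, which it shares with `Γ`, so each ordering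
constraint it imposes is one of `Γ`; the delay property carries it to `Δ`, where it concerns
moves inside `⟨Ψ, πα⟩` only. -/

open Stream'

section PrefixOf

variable {α : Type*}

def PrefixOf (l : List α) (s : Seq α) : Prop := ∀ i < l.length, s.get? i = l[i]?

lemma prefixOf_of_take_eq {s : Seq α} {n : ℕ} {l : List α} (h : s.take n = l) :
    PrefixOf l s := by
  intro i hi
  have hin : i < n := hi.trans_le (h ▸ Seq.length_take_le)
  rw [← h, Seq.getElem?_take, if_pos hin]

lemma prefixOf_ofList_append (l₁ l₂ : List α) : PrefixOf l₁ (Seq.ofList (l₁ ++ l₂)) :=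
  fun i hi => by rw [Seq.ofList_get?, List.getElem?_append_left hi]

lemma prefixOf_ofList (l : List α) : PrefixOf l (Seq.ofList l) := by
  simpa using prefixOf_ofList_append l []

lemma PrefixOf.of_append {l₁ l₂ : List α} {s : Seq α} (h : PrefixOf (l₁ ++ l₂) s) :
    PrefixOf l₁ s := fun i hi => by
  rw [h i (by simp; omega), List.getElem?_append_left hi]

lemma PrefixOf.prefix_of_length_le {l₁ l₂ : List α} {s : Seq α} (h₁ : PrefixOf l₁ s)
    (h₂ : PrefixOf l₂ s) (hle : l₁.length ≤ l₂.length) : l₁ <+: l₂ := by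
  rw [List.prefix_iff_eq_take]
  refine List.ext_getElem? fun i => ?_
  by_cases hi : i < l₁.length
  · rw [List.getElem?_take, if_pos hi, ← h₁ i hi, h₂ i (by omega)]
  · rw [List.getElem?_eq_none (by omega), List.getElem?_eq_none (by simp; omega)]

end PrefixOf

section CountNth

open Nat

variable {p q : ℕ → Prop} [DecidablePred p] [DecidablePred q]

lemma hasNth_of_lt_count {k b : ℕ} (h : k < count p b) : HasNth p k :=
  fun hf => h.trans_le (count_le_card hf b)

lemma lt_count_iff_hasNth_and_nth_lt {k b : ℕ} : k < count p b ↔ HasNth p k ∧ nth p k < b := by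
  refine ⟨fun h => ⟨hasNth_of_lt_count h, nth_lt_of_lt_count h⟩, fun ⟨hk, hlt⟩ => ?_⟩
  calc k < count p (nth p k + 1) := by rw [count_nth_succ hk]; exact k.lt_succ_self
    _ ≤ count p b := count_monotone p hlt

lemma count_congr_of_forall_lt {b : ℕ} (h : ∀ i < b, p i ↔ q i) : count p b = count q b := by
  simp only [count_eq_card_filter_range]
  exact congrArg Finset.card (Finset.filter_congr fun i hi => h i (Finset.mem_range.1 hi))

lemma nth_eq_nth_of_lt_count {k b : ℕ} (h : ∀ i < b, p i ↔ q i) (hk : k < count p b) :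
    nth p k = nth q k := by
  obtain ⟨hk', hlt⟩ := lt_count_iff_hasNth_and_nth_lt.1 hk
  have hq : q (nth p k) := (h _ hlt).1 (nth_mem k hk')
  have hcount : count q (nth p k) = k := by
    rw [← count_congr_of_forall_lt fun i hi => h i (hi.trans hlt), count_nth hk']
  calc nth p k = nth q (count q (nth p k)) := (nth_count hq).symm
    _ = nth q k := by rw [hcount]

end CountNth

section SeqFilterMap

open Classical Nat

variable {α β : Type*} {p : α → Option β} {s : Seq α}

lemma get?_seqFilterMap_ne_none_iff {k : ℕ} :
    (seqFilterMap p s).get? k ≠ none ↔ HasNth (fmPred p s) k := by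
  show (if HasNth (fmPred p s) k then (s.get? (nth (fmPred p s) k)).bind p else none) ≠ none ↔ _
  by_cases hk : HasNth (fmPred p s) k
  · obtain ⟨a, ha, hpa⟩ := nth_mem k hk
    simpa [hk, ha, Option.isSome_iff_ne_none] using hpa
  · simp [hk]

lemma get?_seqFilterMap_count {i : ℕ} (hi : fmPred p s i) :
    (seqFilterMap p s).get? (count (fmPred p s) i) = (s.get? i).bind p := by
  have hk : HasNth (fmPred p s) (count (fmPred p s) i) := fun hf => count_lt_card hf hi
  show (if HasNth _ _ then _ else none) = _
  rw [if_pos hk, nth_count hi]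

lemma PrefixOf.count_fmPred {l : List α} (h : PrefixOf l s) :
    count (fmPred p s) l.length = (l.filterMap p).length := by
  induction l using List.reverseRecOn with
  | nil => simp
  | append_singleton l a ih =>
    have ha : s.get? l.length = some a := by simpa using h l.length (by simp)
    have hfm : fmPred p s l.length ↔ (p a).isSome := by simp [fmPred, ha]
    rw [List.length_append, List.length_singleton, count_succ, ih h.of_append,
      List.filterMap_append, List.length_append]
    cases hpa : p a <;> simp_all

lemma PrefixOf.seqFilterMap {l : List α} (h : PrefixOf l s) :
    PrefixOf (l.filterMap p) (seqFilterMap p s) := by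
  induction l using List.reverseRecOn with
  | nil => simp [PrefixOf]
  | append_singleton l a ih =>
    have ha : s.get? l.length = some a := by simpa using h l.length (by simp)
    intro k hk
    rw [List.filterMap_append] at hk ⊢
    rcases lt_or_ge k (l.filterMap p).length with hlt | hge
    · rw [ih h.of_append k hlt, List.getElem?_append_left hlt]
    · cases hpa : p a with
      | none =>
        have hlen : (l.filterMap p ++ [a].filterMap p).length = (l.filterMap p).length := by
          simp [hpa]
        omega
      | some b =>
        have hlen : (l.filterMap p ++ [a].filterMap p).length = (l.filterMap p).length + 1 := by
          simp [hpa]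
        have hkl : k = count (fmPred p s) l.length := by
          rw [h.of_append.count_fmPred]
          omega
        rw [hkl, get?_seqFilterMap_count ⟨a, ha, by simp [hpa]⟩, ha,
          h.of_append.count_fmPred]
        simp [hpa]

lemma seqFilterMap_ofList (l : List α) :
    seqFilterMap p (Seq.ofList l) = Seq.ofList (l.filterMap p) := by
  refine Seq.ext fun k => ?_
  rw [Seq.ofList_get?]
  by_cases hk : k < (l.filterMap p).length
  · exact (prefixOf_ofList l).seqFilterMap k hk
  · rw [List.getElem?_eq_none (by omega), ← not_ne_iff, get?_seqFilterMap_ne_none_iff]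
    intro hHas
    have hbound : nth (fmPred p (Seq.ofList l)) k < l.length := by
      obtain ⟨a, ha, -⟩ := nth_mem k hHas
      by_contra hge
      simp [Seq.ofList_get?, List.getElem?_eq_none (not_lt.1 hge)] at ha
    have := lt_count_iff_hasNth_and_nth_lt.2 ⟨hHas, hbound⟩
    rw [(prefixOf_ofList l).count_fmPred] at this
    exact hk this

end SeqFilterMap

lemma Player.opp_ne (π : Player) : π.opp ≠ π := by cases π <;> simp [Player.opp]

lemma Player.eq_or_eq_opp (π' π : Player) : π' = π ∨ π' = π.opp := by
  cases π <;> cases π' <;> simp [Player.opp]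

section Labeled

open Classical Nat

variable {π : Player} {R S : Run} {l : Position}

lemma subL_append (π : Player) (l₁ l₂ : Position) :
    subL π (l₁ ++ l₂) = subL π l₁ ++ subL π l₂ := List.filter_append _ _

@[simp]
lemma subL_singleton (π : Player) (x : Labmove) :
    subL π [x] = if x.1 = π then [x] else [] := by
  by_cases h : x.1 = π <;> simp [subL, h]

lemma label_of_mem_subL {x : Labmove} (h : x ∈ subL π l) : x.1 = π := by
  simpa [subL] using (List.mem_filter.1 h).2

lemma labPred_eq_fmPred (π : Player) (R : Run) :
    labPred π R = fmPred (fun lm : Labmove => if lm.1 = π then some lm else none) R := by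
  funext i
  simp only [labPred, fmPred, eq_iff_iff]
  constructor
  · rintro ⟨m, hm⟩
    exact ⟨(π, m), hm, by simp⟩
  · rintro ⟨⟨π', m⟩, hm, hs⟩
    obtain rfl : π' = π := by simpa using hs
    exact ⟨m, hm⟩

lemma filterMap_eq_subL (π : Player) (l : Position) :
    l.filterMap (fun lm : Labmove => if lm.1 = π then some lm else none) = subL π l := by
  induction l with
  | nil => rfl
  | cons x l ih => by_cases h : x.1 = π <;> simp_all [subL]

lemma PrefixOf.count_labPred (h : PrefixOf l R) :
    count (labPred π R) l.length = (subL π l).length := by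
  rw [labPred_eq_fmPred, h.count_fmPred, filterMap_eq_subL]

lemma PrefixOf.subseqOf (h : PrefixOf l R) : PrefixOf (subL π l) (subseqOf π R) := by
  rw [← filterMap_eq_subL]
  exact h.seqFilterMap

lemma subseqOf_ofList (π : Player) (l : Position) :
    subseqOf π (Seq.ofList l) = Seq.ofList (subL π l) := by
  rw [subseqOf, seqFilterMap_ofList, filterMap_eq_subL]

lemma hasNth_labPred_iff {k : ℕ} : HasNth (labPred π R) k ↔ (subseqOf π R).get? k ≠ none := by
  rw [labPred_eq_fmPred, subseqOf, get?_seqFilterMap_ne_none_iff]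

lemma lt_length_subL_of_hasNth {k : ℕ} (h : HasNth (labPred π (Seq.ofList l)) k) :
    k < (subL π l).length := by
  rw [hasNth_labPred_iff, subseqOf_ofList, Seq.ofList_get?] at h
  by_contra hk
  exact h (List.getElem?_eq_none (not_lt.1 hk))

lemma PrefixOf.lt_length_subL_iff (h : PrefixOf l R) {k : ℕ} :
    k < (subL π l).length ↔ HasNth (labPred π R) k ∧ nth (labPred π R) k < l.length := by
  rw [← h.count_labPred, lt_count_iff_hasNth_and_nth_lt]

lemma PrefixOf.nth_labPred_eq (hR : PrefixOf l R) (hS : PrefixOf l S) {k : ℕ}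
    (hk : k < (subL π l).length) : nth (labPred π R) k = nth (labPred π S) k := by
  refine nth_eq_nth_of_lt_count (b := l.length) (fun i hi => ?_) (hR.count_labPred ▸ hk)
  simp only [labPred, hR i hi, hS i hi]

lemma PrefixOf.nth_labPred_length_subL {α : Move} (h : PrefixOf (l ++ [(π, α)]) R) :
    nth (labPred π R) (subL π l).length = l.length := by
  have hlast : labPred π R l.length := ⟨α, by simpa using h l.length (by simp)⟩
  rw [← h.of_append.count_labPred, nth_count hlast]

end Labeled

section Delay

open Classical Nat

variable {π : Player} {Γ Δ : Run}

lemma Delay.lt_length_subL_opp (hd : Delay π Δ Γ) {P : Position} (hP : PrefixOf P Δ) {n k : ℕ}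
    (hn : n < (subL π P).length) (hnΓ : HasNth (labPred π Γ) n)
    (hkΓ : HasNth (labPred π.opp Γ) k)
    (hlt : nth (labPred π.opp Γ) k < nth (labPred π Γ) n) :
    k < (subL π.opp P).length := by
  have hkΔ : HasNth (labPred π.opp Δ) k := by
    rw [hasNth_labPred_iff, hd.1]
    exact hasNth_labPred_iff.1 hkΓ
  exact hP.lt_length_subL_iff.2 ⟨hkΔ, (hd.2 n k hnΓ hkΓ hlt).trans (hP.lt_length_subL_iff.1 hn).2⟩

lemma Delay.subL_opp_isPrefix (hd : Delay π Δ Γ) {Φ Ψ : Position} {α β : Move}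
    (hΦ : PrefixOf (Φ ++ [(π, α)]) Γ) (hΨ : PrefixOf (Ψ ++ [(π, β)]) Δ)
    (hlen : (subL π Φ).length = (subL π Ψ).length) :
    subL π.opp Φ <+: subL π.opp Ψ := by
  have hlast : (subL π Φ).length < (subL π (Φ ++ [(π, α)])).length := by
    simp [subL_append]
  have hNΓ := (hΦ.lt_length_subL_iff.1 hlast).1
  have hN : (subL π Φ).length < (subL π (Ψ ++ [(π, β)])).length := by
    simp [subL_append, hlen]
  have hlt : ∀ k < (subL π.opp Φ).length, k < (subL π.opp Ψ).length := by
    intro k hk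
    obtain ⟨hkΓ, hkΦ⟩ := hΦ.of_append.lt_length_subL_iff.1 hk
    have := hd.lt_length_subL_opp hΨ hN hNΓ hkΓ (by rwa [hΦ.nth_labPred_length_subL])
    simpa [subL_append, Player.opp_ne π |>.symm] using this
  refine hΦ.of_append.subseqOf.prefix_of_length_le ?_ ?_
  · rw [← hd.1]
    exact hΨ.of_append.subseqOf
  · by_contra! h
    exact lt_irrefl _ (hlt _ h)

lemma Delay.nth_lt_nth_of_prefix (hd : Delay π Δ Γ) {Q P G : Position}
    (hQΓ : PrefixOf Q Γ) (hQG : PrefixOf Q (Seq.ofList G)) (hPΔ : PrefixOf P Δ)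
    (hGQ : (subL π G).length = (subL π Q).length)
    (hQP : (subL π Q).length = (subL π P).length) {n k : ℕ}
    (hn : HasNth (labPred π (Seq.ofList G)) n) (hk : HasNth (labPred π.opp (Seq.ofList G)) k)
    (hlt : nth (labPred π.opp (Seq.ofList G)) k < nth (labPred π (Seq.ofList G)) n) :
    nth (labPred π.opp (Seq.ofList P)) k < nth (labPred π (Seq.ofList P)) n := by
  have hnQ : n < (subL π Q).length := hGQ ▸ lt_length_subL_of_hasNth hn
  have hkQ : k < (subL π.opp Q).length :=
    hQG.lt_length_subL_iff.2 ⟨hk, hlt.trans (hQG.lt_length_subL_iff.1 hnQ).2⟩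
  rw [hQG.nth_labPred_eq hQΓ hnQ, hQG.nth_labPred_eq hQΓ hkQ] at hlt
  have hnP : n < (subL π P).length := hQP ▸ hnQ
  have hkP := hd.lt_length_subL_opp hPΔ hnP (hQΓ.lt_length_subL_iff.1 hnQ).1
    (hQΓ.lt_length_subL_iff.1 hkQ).1 hlt
  rw [← hPΔ.nth_labPred_eq (prefixOf_ofList P) hnP,
    ← hPΔ.nth_labPred_eq (prefixOf_ofList P) hkP]
  exact hd.2 n k (hQΓ.lt_length_subL_iff.1 hnQ).1 (hQΓ.lt_length_subL_iff.1 hkQ).1 hlt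

end Delay

lemma subL_append_drop {π : Player} {Φ Ψ : Position} (α : Move) (hπ : subL π Φ = subL π Ψ)
    (hpre : subL π.opp Φ <+: subL π.opp Ψ) (π' : Player) :
    subL π' (Φ ++ [(π, α)] ++ (subL π.opp Ψ).drop (subL π.opp Φ).length) =
      subL π' (Ψ ++ [(π, α)]) := by
  obtain ⟨Θ, hΘ⟩ := hpre
  have hlab : ∀ x ∈ Θ, x.1 = π.opp := fun x hx =>
    label_of_mem_subL (hΘ ▸ List.mem_append_right _ hx)
  rw [← hΘ, List.drop_left]
  rcases Player.eq_or_eq_opp π' π with rfl | rfl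
  · have hΘπ : subL π' Θ = [] := List.filter_eq_nil_iff.2 fun x hx => by
      simp [hlab x hx, Player.opp_ne]
    rw [subL_append, subL_append, subL_append, hΘπ, hπ, List.append_nil]
  · have hΘπ : subL π.opp Θ = Θ := List.filter_eq_self.2 fun x hx => by simp [hlab x hx]
    rw [subL_append, subL_append, subL_append, hΘπ, subL_singleton,
      if_neg (Player.opp_ne π).symm, List.append_nil, List.append_nil, hΘ]

/-- Let `Δ` be a `π`-delay of `Γ`, let `⟨Ψ, πα⟩` be a finite
initial segment of `Δ`, and let `⟨Φ, πα⟩` be the shortest initial segment of `Γ`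
containing all `π`-labeled moves of `⟨Ψ, πα⟩` (characterized by: `⟨Φ, πα⟩` is an
initial segment of `Γ` with the same `π`-subsequence as `⟨Ψ, πα⟩`). Then the
`¬π`-subsequence of `Φ` is an initial segment of that of `Ψ`, and, with `Θ` the
remainder of `Ψ`'s `¬π`-subsequence after `Φ`'s `¬π`-subsequence, `⟨Ψ, πα⟩` is a
`π`-delay of `⟨Φ, πα, Θ⟩`. -/
theorem delay_prefix_structure (π : Player) (Γ Δ : Run) (hd : Delay π Δ Γ)
    (Ψ : Position) (α : Move)
    (hΨ : Stream'.Seq.take (Ψ.length + 1) Δ = Ψ ++ [(π, α)])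
    (Φ : Position)
    (hΦ : Stream'.Seq.take (Φ.length + 1) Γ = Φ ++ [(π, α)])
    (hsub : subL π (Φ ++ [(π, α)]) = subL π (Ψ ++ [(π, α)])) :
    subL π.opp Φ <+: subL π.opp Ψ ∧
    Delay π (Stream'.Seq.ofList (Ψ ++ [(π, α)]))
      (Stream'.Seq.ofList
        (Φ ++ [(π, α)] ++ (subL π.opp Ψ).drop (subL π.opp Φ).length)) := by
  have hQ : PrefixOf (Φ ++ [(π, α)]) Γ := prefixOf_of_take_eq hΦ
  have hP : PrefixOf (Ψ ++ [(π, α)]) Δ := prefixOf_of_take_eq hΨ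
  have hπ : subL π Φ = subL π Ψ := by simpa [subL_append] using hsub
  have hpre := hd.subL_opp_isPrefix hQ hP (congrArg List.length hπ)
  have hG := subL_append_drop α hπ hpre
  refine ⟨hpre, fun π' => ?_, fun n k hn hk hlt => ?_⟩
  · rw [subseqOf_ofList, subseqOf_ofList, hG]
  · refine hd.nth_lt_nth_of_prefix hQ (prefixOf_ofList_append _ _) hP ?_ ?_ hn hk hlt
    · rw [hG, hsub]
    · rw [hsub]
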